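/- With b_i(x) = (2^{i-1}/i!)(−x)^i, one has ∑_{i=1}^{n-1} b_i(x) D^{i+1} P_n^{(α,α)}(x) = −(1/2)[1+(−1)^n] (d/dx) P_n^{(α,α)}(x) for all real x. -/

import Mathlib

/-- The Pochhammer symbol (rising factorial) `(a)_k = a (a+1) ⋯ (a+k-1)`. -/
noncomputable def poch (a : ℝ) (k : ℕ) : ℝ := ∏ j ∈ Finset.range k, (a + j)

/-- Generalized binomial coefficient `binom(a, m) = a(a-1)⋯(a-m+1)/m!` for real `a`. -/
noncomputable def rbinom (a : ℝ) (m : ℕ) : ℝ :=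
  (∏ j ∈ Finset.range m, (a - j)) / (Nat.factorial m : ℝ)

/-- The ultraspherical polynomial `P_n^{(α,α)}`, via its hypergeometric representation
`binom(n+α,n) ∑_{k=0}^n ((-n)_k (n+2α+1)_k)/(k! (α+1)_k) ((1-x)/2)^k`. -/
noncomputable def ultra (n : ℕ) (α : ℝ) : ℝ → ℝ := fun x =>
  rbinom ((n : ℝ) + α) n *
    ∑ k ∈ Finset.range (n + 1),
      poch (-(n : ℝ)) k * poch ((n : ℝ) + 2 * α + 1) k /
        ((Nat.factorial k : ℝ) * poch (α + 1) k) * ((1 - x) / 2) ^ k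

open Finset

noncomputable def ffac (a : ℝ) (k : ℕ) : ℝ := ∏ j ∈ Finset.range k, (a - j)

lemma poch_zero (a : ℝ) : poch a 0 = 1 := by simp [poch]

lemma poch_succ (a : ℝ) (k : ℕ) : poch a (k+1) = poch a k * (a + k) := by
  simp [poch, Finset.prod_range_succ]

lemma ffac_zero (a : ℝ) : ffac a 0 = 1 := by simp [ffac]

lemma ffac_succ (a : ℝ) (k : ℕ) : ffac a (k+1) = ffac a k * (a - k) := by
  simp [ffac, Finset.prod_range_succ]

lemma poch_add (a : ℝ) (p q : ℕ) : poch a (p+q) = poch a p * poch (a + p) q := by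
  simp only [poch, Finset.prod_range_add]
  congr 1
  refine Finset.prod_congr rfl fun j _ => ?_
  push_cast; ring

lemma poch_pos {a : ℝ} (ha : 0 < a) (k : ℕ) : 0 < poch a k :=
  Finset.prod_pos fun j _ => by positivity

lemma poch_ne_zero {a : ℝ} (ha : 0 < a) (k : ℕ) : poch a k ≠ 0 := (poch_pos ha k).ne'

lemma ffac_eq_poch (a : ℝ) (K : ℕ) : ffac a K = poch (a - K + 1) K := by
  unfold ffac poch
  rw [← Finset.prod_range_reflect (fun j => (a - K + 1 + j)) K]
  refine Finset.prod_congr rfl fun j hj => ?_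
  rw [Finset.mem_range] at hj
  have h : ((K - 1 - j : ℕ) : ℝ) = (K : ℝ) - 1 - j := by
    have h2 : K - 1 - j = K - (1 + j) := by omega
    rw [h2, Nat.cast_sub (by omega)]; push_cast; ring
  rw [h]; ring

lemma poch_neg_eq_ffac (a : ℝ) (k : ℕ) : poch (-a) k = (-1)^k * ffac a k := by
  induction k with
  | zero => simp [poch_zero, ffac_zero]
  | succ k ih => rw [poch_succ, ffac_succ, ih, pow_succ]; ring

lemma poch_neg_nat (N m : ℕ) :
    poch (-(N:ℝ)) m = (-1)^m * (N.choose m) * (m.factorial) := by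
  induction m with
  | zero => simp [poch_zero]
  | succ m ih =>
    rw [poch_succ, ih]
    have key : (N.choose (m+1) : ℝ) * (m+1) = (N.choose m : ℝ) * ((N:ℝ) - m) := by
      rcases le_or_gt m N with h | h
      · calc (N.choose (m+1) : ℝ) * (m+1)
            = ((N.choose (m+1) * (m+1) : ℕ) : ℝ) := by push_cast; ring
          _ = ((N.choose m * (N - m) : ℕ) : ℝ) := by rw [Nat.choose_succ_right_eq]
          _ = (N.choose m : ℝ) * ((N:ℝ) - m) := by
              rw [Nat.cast_mul, Nat.cast_sub h]
      · rw [Nat.choose_eq_zero_of_lt h, Nat.choose_eq_zero_of_lt (by omega)]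
        simp
    rw [Nat.factorial_succ]
    push_cast
    linear_combination ((-1:ℝ)^m * (m.factorial : ℝ)) * key

lemma ffvand (N : ℕ) (x y : ℝ) :
    ∑ m ∈ range (N+1), (N.choose m : ℝ) * ffac x m * ffac y (N - m) = ffac (x+y) N := by
  induction N with
  | zero => simp [ffac_zero]
  | succ N ih =>
    rw [ffac_succ, ← ih, Finset.sum_mul]
    rw [Finset.sum_range_succ' (fun m => ((N+1).choose m : ℝ) * ffac x m * ffac y (N+1 - m)) (N+1)]
    have e1 : ∀ m ∈ range (N+1),
        ((N+1).choose (m+1) : ℝ) * ffac x (m+1) * ffac y (N+1 - (m+1))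
        = (N.choose m : ℝ) * ffac x (m+1) * ffac y (N - m)
          + (N.choose (m+1) : ℝ) * ffac x (m+1) * ffac y (N - m) := by
      intro m hm
      have : N + 1 - (m+1) = N - m := by omega
      rw [this, Nat.choose_succ_succ]
      push_cast; ring
    rw [Finset.sum_congr rfl e1, Finset.sum_add_distrib]
    have e2 : (∑ m ∈ range (N+1), (N.choose (m+1) : ℝ) * ffac x (m+1) * ffac y (N - m))
        + ((N+1).choose 0 : ℝ) * ffac x 0 * ffac y (N+1 - 0)
        = ∑ m ∈ range (N+1), (N.choose m : ℝ) * ffac x m * ffac y (N+1 - m) := by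
      rw [Finset.sum_range_succ' (fun m => (N.choose m : ℝ) * ffac x m * ffac y (N+1 - m)) N]
      congr 1
      · rw [Finset.sum_range_succ]
        simp only [Nat.choose_succ_self, Nat.cast_zero, zero_mul, add_zero]
        refine Finset.sum_congr rfl fun m hm => ?_
        rw [show N + 1 - (m+1) = N - m from by omega]
      · simp
    rw [add_assoc, e2, ← Finset.sum_add_distrib]
    -- now: ∑ (C(N,m) x_m y_{N+1-m} + C(N,m) x_{m+1} y_{N-m}) = ∑ C(N,m) x_m y_{N-m} (x+y-N)
    refine Finset.sum_congr rfl fun m hm => ?_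
    rw [Finset.mem_range] at hm
    have h1 : N + 1 - m = (N - m) + 1 := by omega
    rw [h1, ffac_succ, ffac_succ]
    have h2 : ((N - m : ℕ) : ℝ) = (N:ℝ) - m := by rw [Nat.cast_sub (by omega)]
    rw [h2]
    push_cast; ring

lemma vand (N : ℕ) (B C : ℝ) :
    ∑ m ∈ range (N+1), (-1:ℝ)^m * (N.choose m) * poch B m * poch (C + m) (N - m)
      = poch (C - B) N := by
  have h1 : ∀ m ∈ range (N+1),
      (-1:ℝ)^m * (N.choose m) * poch B m * poch (C + m) (N - m)
      = (N.choose m : ℝ) * ffac (-B) m * ffac (C + N - 1) (N - m) := by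
    intro m hm
    rw [Finset.mem_range] at hm
    have hm' : m ≤ N := by omega
    have e1 : poch B m = (-1:ℝ)^m * ffac (-B) m := by
      have := poch_neg_eq_ffac (-B) m
      rwa [neg_neg] at this
    have e2 : ffac (C + N - 1) (N - m) = poch (C + m) (N - m) := by
      rw [ffac_eq_poch]
      congr 1
      rw [Nat.cast_sub hm']
      ring
    rw [e1, ← e2]
    have h4 : (-1:ℝ)^m * (-1)^m = 1 := by rw [← mul_pow]; norm_num
    linear_combination ((N.choose m : ℝ) * ffac (-B) m * ffac (C + ↑N - 1) (N - m)) * h4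
  rw [Finset.sum_congr rfl h1, ffvand, ffac_eq_poch]
  congr 1
  ring

lemma chu (N : ℕ) (B C : ℝ) (hC : ∀ m : ℕ, poch C m ≠ 0) :
    ∑ m ∈ range (N+1), poch (-(N:ℝ)) m * poch B m / ((m.factorial : ℝ) * poch C m)
      = poch (C - B) N / poch C N := by
  rw [eq_div_iff (hC N), Finset.sum_mul, ← vand N B C]
  refine Finset.sum_congr rfl fun m hm => ?_
  rw [Finset.mem_range] at hm
  have hm' : m ≤ N := by omega
  have hsplit : poch C N = poch C m * poch (C + m) (N - m) := by
    rw [← poch_add]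
    congr 1
    omega
  rw [poch_neg_nat, hsplit]
  have h1 : (m.factorial : ℝ) ≠ 0 := Nat.cast_ne_zero.2 m.factorial_ne_zero
  rw [div_mul_eq_mul_div, div_eq_iff (mul_ne_zero h1 (hC m))]
  ring

noncomputable def sC (n : ℕ) (α : ℝ) (k : ℕ) : ℝ :=
  poch (-(n : ℝ)) k * poch ((n : ℝ) + 2 * α + 1) k / ((Nat.factorial k : ℝ) * poch (α + 1) k)

lemma hasDerivAt_upow (j : ℕ) (x : ℝ) :
    HasDerivAt (fun x : ℝ => ((1 - x)/2)^j) ((j:ℝ) * ((1-x)/2)^(j-1) * (-(1/2))) x := by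
  have h : HasDerivAt (fun x : ℝ => (1 - x)/2) (-(1/2)) x := by
    have h1 : HasDerivAt (fun x : ℝ => 1 - x) (-1) x := by
      simpa using (hasDerivAt_id x).const_sub 1
    have h2 := h1.div_const 2
    simpa [neg_div] using h2
  exact h.pow j

lemma iter_ultra (n : ℕ) (α : ℝ) (m : ℕ) :
    iteratedDeriv m (ultra n α) = fun x =>
      rbinom ((n:ℝ) + α) n * ∑ k ∈ Finset.range (n+1),
        sC n α k * ((-(1/2:ℝ))^m * (k.descFactorial m : ℝ) * ((1-x)/2)^(k-m)) := by
  induction m with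
  | zero =>
    funext x
    simp only [iteratedDeriv_zero, ultra, Nat.descFactorial_zero, pow_zero, Nat.sub_zero,
      Nat.cast_one, one_mul, mul_one, sC]
  | succ m ih =>
    funext x
    rw [iteratedDeriv_succ, ih]
    have H : HasDerivAt (fun y : ℝ => rbinom ((n:ℝ) + α) n * ∑ k ∈ Finset.range (n+1),
        sC n α k * ((-(1/2:ℝ))^m * (k.descFactorial m : ℝ) * ((1-y)/2)^(k-m)))
        (rbinom ((n:ℝ) + α) n * ∑ k ∈ Finset.range (n+1),
        sC n α k * ((-(1/2:ℝ))^m * (k.descFactorial m : ℝ) *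
          (((k-m : ℕ):ℝ) * ((1-x)/2)^(k-m-1) * (-(1/2))))) x := by
      refine HasDerivAt.const_mul _ (HasDerivAt.fun_sum fun k hk => ?_)
      exact HasDerivAt.const_mul _ (HasDerivAt.const_mul _ (hasDerivAt_upow (k-m) x))
    rw [H.deriv]
    congr 1
    refine Finset.sum_congr rfl fun k hk => ?_
    congr 1
    rw [Nat.descFactorial_succ, Nat.cast_mul]
    rw [show k - (m+1) = k - m - 1 from by omega]
    ring

lemma pow_aux (i : ℕ) (x : ℝ) :
    (2:ℝ)^i * ((-x)^(i+1) * (-(1/2:ℝ))^(i+2)) = -(x^(i+1))/4 := by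
  induction i with
  | zero => ring
  | succ i ih => linear_combination x * ih

lemma natK (k i : ℕ) :
    k.descFactorial (i+1) = k * ((k-1).choose i) * i.factorial := by
  rcases k with _ | k'
  · simp
  · rw [Nat.descFactorial_eq_factorial_mul_choose]
    have h := Nat.add_one_mul_choose_eq k' i
    calc (i+1).factorial * (k'+1).choose (i+1)
        = i.factorial * ((k'+1).choose (i+1) * (i+1)) := by
          rw [Nat.factorial_succ]; ring
      _ = i.factorial * ((k'+1) * k'.choose i) := by rw [← h]
      _ = (k'+1) * ((k'+1-1).choose i) * i.factorial := by
          rw [Nat.add_sub_cancel]; ring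

lemma collapse (n k : ℕ) (hk : k ≤ n) (x : ℝ) :
    ∑ i ∈ Finset.Icc 1 (n-1), (2^(i-1) / (Nat.factorial i : ℝ)) * (-x)^i *
        ((-(1/2:ℝ))^(i+1) * (k.descFactorial (i+1) : ℝ) * ((1-x)/2)^(k-(i+1)))
    = -(1/4) * k * (((1+x)/2)^(k-1) - ((1-x)/2)^(k-1)) := by
  rcases Nat.eq_zero_or_pos k with rfl | hk1
  · simp
  have hterm : ∀ i ∈ Finset.Icc 1 (n-1),
      (2^(i-1) / (Nat.factorial i : ℝ)) * (-x)^i *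
        ((-(1/2:ℝ))^(i+1) * (k.descFactorial (i+1) : ℝ) * ((1-x)/2)^(k-(i+1)))
      = -(1/4) * ((k:ℝ) * ((k-1).choose i : ℝ) * x^i * ((1-x)/2)^(k-1-i)) := by
    intro i hi
    rw [Finset.mem_Icc] at hi
    obtain ⟨i', rfl⟩ : ∃ i', i = i'+1 := ⟨i-1, by omega⟩
    rw [natK, show k - (i'+1+1) = k - 1 - (i'+1) from by omega]
    push_cast
    have hF : ((i'+1).factorial : ℝ) ≠ 0 := Nat.cast_ne_zero.2 (Nat.factorial_ne_zero _)
    have hFF : ((i'+1).factorial : ℝ) * ((i'+1).factorial : ℝ)⁻¹ = 1 := mul_inv_cancel₀ hF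
    have hpow := pow_aux i' x
    rw [div_eq_mul_inv]
    linear_combination
      ((k:ℝ) * ((k-1).choose (i'+1) : ℝ) * ((1-x)/2)^(k-1-(i'+1)) *
        ((2:ℝ)^i' * ((-x)^(i'+1) * (-(1/2:ℝ))^(i'+2)))) * hFF +
      ((k:ℝ) * ((k-1).choose (i'+1) : ℝ) * ((1-x)/2)^(k-1-(i'+1))) * hpow
  rw [Finset.sum_congr rfl hterm, ← Finset.mul_sum]
  have hsub : Finset.Icc 1 (k-1) ⊆ Finset.Icc 1 (n-1) :=
    Finset.Icc_subset_Icc_right (by omega)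
  have hvan : ∀ i ∈ Finset.Icc 1 (n-1), i ∉ Finset.Icc 1 (k-1) →
      (k:ℝ) * ((k-1).choose i : ℝ) * x^i * ((1-x)/2)^(k-1-i) = 0 := by
    intro i hi hni
    rw [Finset.mem_Icc] at hi hni
    rw [Nat.choose_eq_zero_of_lt (by omega)]
    simp
  have hsum : ∑ i ∈ Finset.Icc 1 (n-1),
        (k:ℝ) * ((k-1).choose i : ℝ) * x^i * ((1-x)/2)^(k-1-i)
      = k * (((1+x)/2)^(k-1) - ((1-x)/2)^(k-1)) := by
    rw [← Finset.sum_subset hsub hvan]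
    rw [show Finset.Icc 1 (k-1) = Finset.Ico 1 k from by
      rw [← Finset.Ico_add_one_right_eq_Icc]; congr 1; omega]
    rw [Finset.sum_Ico_eq_sum_range]
    rw [show ((1+x)/2 : ℝ) = x + (1-x)/2 from by ring, add_pow]
    rw [Finset.sum_range_succ'
      (fun j => x^j * ((1-x)/2)^(k-1-j) * ((k-1).choose j : ℝ)) (k-1)]
    simp only [pow_zero, Nat.choose_zero_right, Nat.cast_one, one_mul, mul_one, Nat.sub_zero]
    rw [add_sub_cancel_right, Finset.mul_sum]
    refine Finset.sum_congr rfl fun i hi => ?_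
    rw [show 1 + i = i + 1 from by omega]
    ring
  rw [hsum]
  ring

lemma KI (α : ℝ) (hα : -1 < α) (n j : ℕ) (hj : j < n) :
    ∑ k ∈ Finset.range n, sC n α (k+1) * ((k:ℝ)+1) * (k.choose j : ℝ)
      = (-1:ℝ)^(n+j+1) * (sC n α (j+1) * ((j:ℝ)+1)) := by
  set N := n - 1 - j with hNdef
  have hn : n = N + 1 + j := by omega
  have hcast : (n:ℝ) = (N:ℝ) + 1 + (j:ℝ) := by exact_mod_cast congrArg (Nat.cast (R := ℝ)) hn
  set B : ℝ := (n:ℝ) + 2*α + 1 + ((j:ℝ)+1) with hB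
  set C : ℝ := α + 1 + ((j:ℝ)+1) with hC
  have hCpos : 0 < C := by
    have : (0:ℝ) ≤ j := Nat.cast_nonneg j
    rw [hC]; linarith
  have hCne : ∀ m : ℕ, poch C m ≠ 0 := fun m => poch_ne_zero hCpos m
  have hQ1 : poch (α+1) (j+1) ≠ 0 := poch_ne_zero (by linarith) _
  have hsplit : ∑ k ∈ Finset.range n, sC n α (k+1) * ((k:ℝ)+1) * (k.choose j : ℝ)
      = ∑ k ∈ Finset.Ico j n, sC n α (k+1) * ((k:ℝ)+1) * (k.choose j : ℝ) := by
    rw [Finset.range_eq_Ico, ← Finset.sum_Ico_consecutive _ (Nat.zero_le j) hj.le]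
    have hz : ∑ k ∈ Finset.Ico 0 j, sC n α (k+1) * ((k:ℝ)+1) * (k.choose j : ℝ) = 0 :=
      Finset.sum_eq_zero fun k hk => by
        rw [Finset.mem_Ico] at hk
        rw [Nat.choose_eq_zero_of_lt hk.2]
        simp
    rw [hz, zero_add]
  rw [hsplit, Finset.sum_Ico_eq_sum_range, show n - j = N + 1 from by omega]
  have hterm : ∀ m ∈ Finset.range (N+1),
      sC n α ((j+m)+1) * (((j+m : ℕ):ℝ)+1) * (((j+m).choose j : ℕ) : ℝ)
      = (sC n α (j+1) * ((j:ℝ)+1)) *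
          (poch (-(N:ℝ)) m * poch B m / ((m.factorial : ℝ) * poch C m)) := by
    intro m hm
    rw [Finset.mem_range] at hm
    simp only [sC]
    rw [show (j+m)+1 = (j+1)+m from by omega]
    rw [poch_add (-(n:ℝ)) (j+1) m, poch_add ((n:ℝ)+2*α+1) (j+1) m, poch_add (α+1) (j+1) m]
    rw [show (-(n:ℝ) + ((j+1 : ℕ):ℝ)) = -(N:ℝ) from by push_cast; rw [hcast]; ring]
    rw [show ((n:ℝ)+2*α+1 + ((j+1 : ℕ):ℝ)) = B from by rw [hB]; push_cast; ring]
    rw [show (α+1 + ((j+1 : ℕ):ℝ)) = C from by rw [hC]; push_cast; ring]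
    have hcs : (j+m).choose j = (j+m).choose m := by
      have h := Nat.choose_symm (n := j+m) (k := j) (by omega)
      rw [Nat.add_sub_cancel_left] at h
      exact h.symm
    have hfac : ((j+m).factorial : ℝ)
        = ((j+m).choose j : ℝ) * (j.factorial : ℝ) * (m.factorial : ℝ) := by
      rw [hcs]
      exact_mod_cast (congrArg (Nat.cast (R := ℝ))
        (Nat.add_choose_mul_factorial_mul_factorial j m)).symm
    have hfacbig : (((j+1)+m).factorial : ℝ) = ((j:ℝ)+m+1) * ((j+m).factorial : ℝ) := by
      rw [show (j+1)+m = (j+m)+1 from by omega, Nat.factorial_succ]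
      push_cast; ring
    have hfacj1 : ((j+1).factorial : ℝ) = ((j:ℝ)+1) * (j.factorial : ℝ) := by
      rw [Nat.factorial_succ]; push_cast; ring
    rw [hfacbig, hfac, hfacj1]
    have h1 : (j.factorial : ℝ) ≠ 0 := Nat.cast_ne_zero.2 (Nat.factorial_ne_zero _)
    have h2 : (m.factorial : ℝ) ≠ 0 := Nat.cast_ne_zero.2 (Nat.factorial_ne_zero _)
    have h3 : ((j:ℝ)+m+1) ≠ 0 := by positivity
    have h4 : ((j:ℝ)+1) ≠ 0 := by positivity
    have h5 : poch C m ≠ 0 := hCne m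
    have h6 : (((j+m).choose j : ℕ) : ℝ) ≠ 0 :=
      Nat.cast_ne_zero.2 (Nat.choose_pos (by omega)).ne'
    push_cast
    field_simp
  rw [Finset.sum_congr rfl hterm, ← Finset.mul_sum, chu N B C hCne]
  have hCB : C - B = -((n:ℝ) + α) := by rw [hB, hC]; ring
  have hrefl : poch (C - B) N = (-1:ℝ)^N * poch C N := by
    rw [hCB, poch_neg_eq_ffac, ffac_eq_poch]
    rw [show (n:ℝ) + α - (N:ℝ) + 1 = C from by rw [hC, hcast]; ring]
  rw [hrefl]
  rw [show (-1:ℝ)^N * poch C N / poch C N = (-1:ℝ)^N from by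
    rw [mul_div_assoc, div_self (hCne N), mul_one]]
  rw [show ((-1:ℝ))^(n+j+1) = (-1:ℝ)^N from by
    rw [show n+j+1 = N + 2*(j+1) from by omega, pow_add, pow_mul]; norm_num]
  ring

lemma star (α : ℝ) (hα : -1 < α) (n : ℕ) (x : ℝ) :
    ∑ k ∈ Finset.range (n+1), sC n α k * (k:ℝ) * ((1+x)/2)^(k-1)
      = -((-1:ℝ)^n) * ∑ k ∈ Finset.range (n+1), sC n α k * (k:ℝ) * ((1-x)/2)^(k-1) := by
  rw [Finset.sum_range_succ' (fun k => sC n α k * (k:ℝ) * ((1+x)/2)^(k-1)) n,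
      Finset.sum_range_succ' (fun k => sC n α k * (k:ℝ) * ((1-x)/2)^(k-1)) n]
  simp only [Nat.cast_zero, mul_zero, zero_mul, add_zero, Nat.cast_add, Nat.cast_one,
    Nat.add_sub_cancel]
  have expand : ∀ k ∈ Finset.range n, ((1+x)/2 : ℝ)^k
      = ∑ j ∈ Finset.range n, ((-((1-x)/2))^j * (k.choose j : ℝ)) := by
    intro k hk
    rw [Finset.mem_range] at hk
    rw [show ((1+x)/2 : ℝ) = -((1-x)/2) + 1 from by ring, add_pow]
    simp only [one_pow, mul_one]
    refine Finset.sum_subset (Finset.range_subset_range.2 (by omega)) fun j hj hnj => ?_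
    rw [Finset.mem_range] at hj
    rw [Nat.choose_eq_zero_of_lt (by simp only [Finset.mem_range] at hnj; omega)]
    simp
  calc ∑ k ∈ Finset.range n, sC n α (k+1) * ((k:ℝ)+1) * ((1+x)/2)^k
      = ∑ k ∈ Finset.range n, ∑ j ∈ Finset.range n,
          (-((1-x)/2))^j * (sC n α (k+1) * ((k:ℝ)+1) * (k.choose j : ℝ)) := by
        refine Finset.sum_congr rfl fun k hk => ?_
        rw [expand k hk, Finset.mul_sum]
        exact Finset.sum_congr rfl fun j hj => by ring
    _ = ∑ j ∈ Finset.range n, (-((1-x)/2))^j *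
          ∑ k ∈ Finset.range n, sC n α (k+1) * ((k:ℝ)+1) * (k.choose j : ℝ) := by
        rw [Finset.sum_comm]
        exact Finset.sum_congr rfl fun j hj => by rw [Finset.mul_sum]
    _ = ∑ j ∈ Finset.range n, (-((1-x)/2))^j *
          ((-1:ℝ)^(n+j+1) * (sC n α (j+1) * ((j:ℝ)+1))) := by
        refine Finset.sum_congr rfl fun j hj => ?_
        rw [Finset.mem_range] at hj
        rw [KI α hα n j hj]
    _ = -(-1:ℝ)^n * ∑ k ∈ Finset.range n, sC n α (k+1) * ((k:ℝ)+1) * ((1-x)/2)^k := by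
        rw [Finset.mul_sum]
        refine Finset.sum_congr rfl fun j hj => ?_
        have hsgn : ((-1:ℝ))^(n+j+1) * (-1)^j = -(-1:ℝ)^n := by
          rw [← pow_add, show n+j+1+j = (n+1) + 2*j from by omega, pow_add, pow_mul]
          rw [pow_succ]
          norm_num
        rw [neg_pow ((1-x)/2) j]
        linear_combination ((1-x)/2)^j * (sC n α (j+1) * ((j:ℝ)+1)) * hsgn

/-- `∑_{i≥1} b_i(x) D^{i+1} P_n^{(α,α)}(x) = -(1/2)(1+(-1)^n) (d/dx) P_n^{(α,α)}(x)`. -/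
theorem ultra_b_shift_sum (α : ℝ) (hα : -1 < α) (n : ℕ) (x : ℝ) :
    ∑ i ∈ Finset.Icc 1 (n - 1),
        (2 ^ (i - 1) / (Nat.factorial i : ℝ)) * (-x) ^ i *
          iteratedDeriv (i + 1) (ultra n α) x
      = -(1 / 2) * (1 + (-1 : ℝ) ^ n) * deriv (ultra n α) x := by
  rw [show deriv (ultra n α) = iteratedDeriv 1 (ultra n α) from (iteratedDeriv_one).symm]
  simp only [iter_ultra]
  set C0 : ℝ := rbinom ((n:ℝ) + α) n with hC0
  have h1 : ∑ i ∈ Finset.Icc 1 (n-1), (2 ^ (i - 1) / (Nat.factorial i : ℝ)) * (-x) ^ i *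
        (C0 * ∑ k ∈ Finset.range (n+1),
          sC n α k * ((-(1/2:ℝ))^(i+1) * (k.descFactorial (i+1) : ℝ) * ((1-x)/2)^(k-(i+1))))
      = C0 * ∑ k ∈ Finset.range (n+1), sC n α k *
          (∑ i ∈ Finset.Icc 1 (n-1), (2 ^ (i - 1) / (Nat.factorial i : ℝ)) * (-x) ^ i *
            ((-(1/2:ℝ))^(i+1) * (k.descFactorial (i+1) : ℝ) * ((1-x)/2)^(k-(i+1)))) := by
    rw [Finset.mul_sum]
    rw [show (∑ i ∈ Finset.Icc 1 (n-1), (2 ^ (i - 1) / (Nat.factorial i : ℝ)) * (-x) ^ i *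
        (C0 * ∑ k ∈ Finset.range (n+1),
          sC n α k * ((-(1/2:ℝ))^(i+1) * (k.descFactorial (i+1) : ℝ) * ((1-x)/2)^(k-(i+1)))))
      = ∑ i ∈ Finset.Icc 1 (n-1), ∑ k ∈ Finset.range (n+1),
          C0 * (sC n α k * ((2 ^ (i - 1) / (Nat.factorial i : ℝ)) * (-x) ^ i *
            ((-(1/2:ℝ))^(i+1) * (k.descFactorial (i+1) : ℝ) * ((1-x)/2)^(k-(i+1))))) from
      Finset.sum_congr rfl fun i hi => by
        rw [Finset.mul_sum, Finset.mul_sum]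
        exact Finset.sum_congr rfl fun k hk => by ring]
    rw [Finset.sum_comm]
    refine Finset.sum_congr rfl fun k hk => ?_
    rw [Finset.mul_sum, Finset.mul_sum]
  rw [h1]
  have h2 : ∀ k ∈ Finset.range (n+1),
      sC n α k * (∑ i ∈ Finset.Icc 1 (n-1),
        (2 ^ (i - 1) / (Nat.factorial i : ℝ)) * (-x) ^ i *
          ((-(1/2:ℝ))^(i+1) * (k.descFactorial (i+1) : ℝ) * ((1-x)/2)^(k-(i+1))))
      = sC n α k * (-(1/4) * k * (((1+x)/2)^(k-1) - ((1-x)/2)^(k-1))) := by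
    intro k hk
    rw [Finset.mem_range] at hk
    rw [collapse n k (by omega) x]
  rw [Finset.sum_congr rfl h2]
  have hstar := star α hα n x
  have e3 : ∑ k ∈ Finset.range (n+1),
        sC n α k * (-(1/4) * k * (((1+x)/2)^(k-1) - ((1-x)/2)^(k-1)))
      = -(1/4) * ((∑ k ∈ Finset.range (n+1), sC n α k * (k:ℝ) * ((1+x)/2)^(k-1))
          - ∑ k ∈ Finset.range (n+1), sC n α k * (k:ℝ) * ((1-x)/2)^(k-1)) := by
    rw [← Finset.sum_sub_distrib, Finset.mul_sum]
    exact Finset.sum_congr rfl fun k hk => by ring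
  have e4 : ∑ k ∈ Finset.range (n+1),
        sC n α k * ((-(1/2:ℝ))^1 * (k.descFactorial 1 : ℝ) * ((1-x)/2)^(k-1))
      = -(1/2) * ∑ k ∈ Finset.range (n+1), sC n α k * (k:ℝ) * ((1-x)/2)^(k-1) := by
    rw [Finset.mul_sum]
    refine Finset.sum_congr rfl fun k hk => ?_
    rw [Nat.descFactorial_one]
    ring
  rw [e3, e4]
  linear_combination (-(C0)/4) * hstar
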